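/- Combinatorial Artin–Rees lemma: let P be a pointed monoid whose sharp quotient P^♯ is finitely generated, J ⊂ P an ideal, M a finitely generated P-module, and M_0 ⊂ M a P-submodule. Then there exists c ∈ ℕ such that J^n M ∩ M_0 = J^{n−c}(J^c M ∩ M_0) for every n > c. -/

import Mathlib

/-- For a pointed monoid `P` acting on a pointed `P`-module `M`, the set `J^n · S`:
all elements `(j₁ ⋯ jₙ) • s` with `jᵢ ∈ J` and `s ∈ S`. -/
def smulPow {P M : Type*} [CommMonoidWithZero P] [Zero M] [MulActionWithZero P M]
    (J : Set P) (n : ℕ) (S : Set M) : Set M :=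
  {x | ∃ f : Fin n → P, (∀ i, f i ∈ J) ∧ ∃ s ∈ S, x = (∏ i, f i) • s}

/-!
Up to units, `P` is a quotient of `ℕ^k`, so by Dickson's lemma `J` is generated by finitely many
monomials and the Rees monoid `{(p, n) | p ∈ J^n}` is noetherian: any subset of it is generated, under
divisibility in the Rees monoid, by finitely many elements. For a generator `s` of `M` the pairs
`(p, n)` with `p • s ∈ M₀` are therefore generated in degrees `≤ c_s`, and `c = max c_s` works: an
element of `J^n M ∩ M₀` with `n > c` is `q • e • s` with `q ∈ J^(n-c)` and `e • s ∈ J^c M ∩ M₀`.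
-/

open scoped Pointwise

theorem exists_finset_subset_forall_exists_le {α : Type*} [PartialOrder α] [WellQuasiOrderedLE α]
    (S : Set α) : ∃ F : Finset α, ↑F ⊆ S ∧ ∀ v ∈ S, ∃ f ∈ F, f ≤ v := by
  have hfin : {x | Minimal (· ∈ S) x}.Finite :=
    WellQuasiOrderedLE.finite_of_isAntichain (setOfPred_minimal_antichain _)
  refine ⟨hfin.toFinset, fun x hx => (hfin.mem_toFinset.1 hx).prop, fun v hv => ?_⟩
  obtain ⟨f, hfv, hf⟩ := exists_minimal_le_of_wellFoundedLT (· ∈ S) v hv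
  exact ⟨f, hfin.mem_toFinset.2 hf, hfv⟩

theorem smulPow_eq_pow_smul {P M : Type*} [CommMonoidWithZero P] [Zero M]
    [MulActionWithZero P M] (J : Set P) (n : ℕ) (S : Set M) : smulPow J n S = J ^ n • S := by
  ext x
  simp only [smulPow, Set.mem_ofPred_eq, Set.mem_smul, Set.mem_pow_iff_prod]
  constructor
  · rintro ⟨f, hf, s, hs, rfl⟩
    exact ⟨_, ⟨f, hf, rfl⟩, s, hs, rfl⟩
  · rintro ⟨_, ⟨f, hf, rfl⟩, s, hs, rfl⟩
    exact ⟨f, hf, s, hs, rfl⟩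

theorem pow_smul_inter_subset {P M : Type*} [Monoid P] [MulAction P M] (J : Set P) {M₀ : Set M}
    (hM₀ : ∀ m ∈ M₀, ∀ p : P, p • m ∈ M₀) {c n : ℕ} (hcn : c ≤ n) :
    J ^ (n - c) • (J ^ c • Set.univ ∩ M₀) ⊆ J ^ n • Set.univ ∩ M₀ := by
  rintro _ ⟨a, ha, m, ⟨hm, hm₀⟩, rfl⟩
  refine ⟨?_, hM₀ m hm₀ a⟩
  rw [← Nat.sub_add_cancel hcn, pow_add, mul_smul]
  exact Set.smul_mem_smul ha hm

section Monomial

variable {P ι : Type*} [CommMonoid P] [Fintype ι]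

def monomial (g : ι → P) (x : ι → ℕ) : P :=
  ∏ i, g i ^ x i

theorem monomial_zero (g : ι → P) : monomial g 0 = 1 := by
  simp [monomial]

theorem monomial_add (g : ι → P) (x y : ι → ℕ) :
    monomial g (x + y) = monomial g x * monomial g y := by
  simp only [monomial, Pi.add_apply, pow_add, Finset.prod_mul_distrib]

theorem monomial_single [DecidableEq ι] (g : ι → P) (i : ι) :
    monomial g (Pi.single i 1) = g i := by
  rw [monomial, Finset.prod_eq_single i] <;> simp_all

theorem monomial_dvd_monomial (g : ι → P) {x y : ι → ℕ} (h : x ≤ y) :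
    monomial g x ∣ monomial g y :=
  ⟨monomial g (y - x), by rw [← monomial_add, add_tsub_cancel_of_le h]⟩

theorem monomial_mem_pow {J : Set P} {g : ι → P} (hg : ∀ i, g i ∈ J) (x : ι → ℕ) :
    monomial g x ∈ J ^ ∑ i, x i := by
  rw [← Finset.prod_pow_eq_pow_sum]
  exact Set.finsetProd_mem_finsetProd _ _ _ fun i _ => Set.pow_mem_pow (hg i)

end Monomial

theorem exists_monomial_dvd_of_mem_pow {P : Type*} [CommMonoid P] {J : Set P} {G : Finset P}
    (hG : ∀ p ∈ J, ∃ a ∈ G, a ∣ p) {n : ℕ} {p : P} (hp : p ∈ J ^ n) :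
    ∃ x : G → ℕ, ∑ i, x i = n ∧ monomial (↑) x ∣ p := by
  classical
  induction n generalizing p with
  | zero =>
    rw [pow_zero, Set.mem_one] at hp
    exact ⟨0, by simp, by simp [hp, monomial_zero]⟩
  | succ n ih =>
    rw [pow_succ] at hp
    obtain ⟨a, ha, b, hb, rfl⟩ := hp
    obtain ⟨x, hx, hxa⟩ := ih ha
    obtain ⟨i, hi, hib⟩ := hG b hb
    refine ⟨x + Pi.single ⟨i, hi⟩ 1, by
      simp only [Pi.add_apply, Finset.sum_add_distrib, hx, Finset.sum_pi_single', Finset.mem_univ,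
        if_true], ?_⟩
    rw [monomial_add, monomial_single]
    exact mul_dvd_mul hxa hib

theorem Associates.exists_finset_associated_monomial {P : Type*} [CommMonoid P]
    (h : Monoid.FG (Associates P)) :
    ∃ s : Finset P, ∀ p : P, ∃ x : s → ℕ, Associated (monomial (↑) x) p := by
  classical
  obtain ⟨T, hT⟩ := h.fg_top
  choose rep hrep using Associates.mk_surjective (M := P)
  refine ⟨T.image rep, fun p => ?_⟩
  have hrange : Set.range (fun i : T.image rep => Associates.mk (i : P)) = T := by
    ext a
    simp [hrep]
  obtain ⟨x, hx⟩ := Submonoid.mem_closure_range_iff_of_fintype.1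
    (hrange ▸ hT ▸ Submonoid.mem_top (Associates.mk p))
  refine ⟨x, Associates.mk_eq_mk_iff_associated.1 ?_⟩
  rw [hx, monomial, ← Associates.mkMonoidHom_apply, map_prod]
  simp [Associates.mk_pow]

namespace SemigroupIdeal

variable {P : Type*} [CommMonoid P] (I : SemigroupIdeal P)

theorem mem_of_dvd {a b : P} (hab : a ∣ b) (ha : a ∈ I) : b ∈ I := by
  obtain ⟨c, rfl⟩ := hab
  rw [mul_comm]
  exact I.mul_mem c ha

theorem mul_mem_pow {n : ℕ} (hn : n ≠ 0) {x : P} (hx : x ∈ (I : Set P) ^ n) (p : P) :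
    p * x ∈ (I : Set P) ^ n := by
  obtain ⟨m, rfl⟩ := Nat.exists_eq_succ_of_ne_zero hn
  rw [pow_succ'] at hx ⊢
  obtain ⟨a, ha, b, hb, rfl⟩ := hx
  rw [← mul_assoc]
  exact Set.mul_mem_mul (I.mul_mem p ha) hb

theorem exists_finset_subset_forall_dvd {ι : Type*} [Fintype ι] {g : ι → P}
    (hg : ∀ p, ∃ x, Associated (monomial g x) p) :
    ∃ G : Finset P, ↑G ⊆ (I : Set P) ∧ ∀ p ∈ I, ∃ a ∈ G, a ∣ p := by
  classical
  obtain ⟨F, hFI, hF⟩ := exists_finset_subset_forall_exists_le {x | monomial g x ∈ I}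
  refine ⟨F.image (monomial g), by simpa [Set.subset_def] using hFI, fun p hp => ?_⟩
  obtain ⟨x, hx⟩ := hg p
  obtain ⟨f, hfF, hfx⟩ := hF x (I.mem_of_dvd hx.symm.dvd hp)
  exact ⟨monomial g f, Finset.mem_image_of_mem _ hfF, (monomial_dvd_monomial g hfx).trans hx.dvd⟩

theorem exists_bounded_rees_generators {ι : Type*} [Fintype ι] {g : ι → P}
    (hg : ∀ p, ∃ x, Associated (monomial g x) p)
    (A : Set (P × ℕ)) (hA : ∀ x ∈ A, x.1 ∈ (I : Set P) ^ x.2) :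
    ∃ c, ∀ x ∈ A, ∃ e ∈ A, e.2 ≤ c ∧ ∃ q ∈ (I : Set P) ^ (x.2 - e.2), q * e.1 ∣ x.1 := by
  obtain ⟨G, hGI, hG⟩ := I.exists_finset_subset_forall_dvd hg
  -- `v` is an exponent pair of `G^v.2 g^v.1`, whose Rees degree is `|v.2|`
  obtain ⟨F, hFV, hF⟩ := exists_finset_subset_forall_exists_le
    {v : (ι → ℕ) × (G → ℕ) | ∃ e ∈ A, e.2 = ∑ j, v.2 j ∧
      Associated (monomial (↑) v.2 * monomial g v.1) e.1}
  refine ⟨F.sup fun v => ∑ j, v.2 j, fun x hx => ?_⟩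
  obtain ⟨y, hy, b, hb⟩ := exists_monomial_dvd_of_mem_pow hG (hA x hx)
  obtain ⟨z, hz⟩ := hg b
  have hv : Associated (monomial (↑) y * monomial g z) x.1 := hb ▸ hz.mul_left _
  obtain ⟨f, hfF, hfv⟩ := hF (z, y) ⟨x, hx, hy.symm, hv⟩
  obtain ⟨e, heA, he2, he1⟩ := hFV hfF
  refine ⟨e, heA, he2 ▸ Finset.le_sup (f := fun v => ∑ j, v.2 j) hfF,
    monomial (↑) (y - f.2), ?_, ?_⟩
  · rw [he2, ← hy, ← Finset.sum_tsub_distrib _ fun j _ => hfv.2 j]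
    exact monomial_mem_pow (fun j => hGI j.2) _
  · calc monomial (↑) (y - f.2) * e.1
        ∣ monomial (↑) (y - f.2) * (monomial (↑) f.2 * monomial g f.1) :=
          mul_dvd_mul_left _ he1.symm.dvd
      _ = monomial (↑) y * monomial g f.1 := by
          rw [← mul_assoc, ← monomial_add, tsub_add_cancel_of_le hfv.2]
      _ ∣ monomial (↑) y * monomial g z := mul_dvd_mul_left _ (monomial_dvd_monomial g hfv.1)
      _ ∣ x.1 := hv.dvd

theorem smul_mem_pow_smul_inter {M : Type*} [MulAction P M] {M₀ : Set M}
    (hM₀ : ∀ m ∈ M₀, ∀ p : P, p • m ∈ M₀) {c k n : ℕ} (hkc : k ≤ c) (hcn : c < n)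
    {p e q : P} (hq : q ∈ (I : Set P) ^ (n - k)) (hqe : q * e ∣ p) (he : e ∈ (I : Set P) ^ k)
    {s : M} (hs : e • s ∈ M₀) :
    p • s ∈ (I : Set P) ^ (n - c) • ((I : Set P) ^ c • Set.univ ∩ M₀) := by
  rw [show n - k = (n - c) + (c - k) by omega, pow_add] at hq
  obtain ⟨a, ha, b, hb, rfl⟩ := hq
  obtain ⟨d, rfl⟩ := hqe
  have hbe : b * e ∈ (I : Set P) ^ c := by
    rw [← Nat.sub_add_cancel hkc, pow_add]
    exact Set.mul_mem_mul hb he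
  refine ⟨d * a, I.mul_mem_pow (by omega) ha d, (b * e) • s,
    ⟨Set.smul_mem_smul hbe (Set.mem_univ s), mul_smul b e s ▸ hM₀ _ hs b⟩, ?_⟩
  simp only [smul_smul]
  exact congrArg (· • s) (by ac_rfl)

end SemigroupIdeal

theorem stmt8_general {P M : Type*} [CommMonoidWithZero P] [Zero M] [MulActionWithZero P M]
    (hfg : Monoid.FG (Associates P))
    (J : Set P) (hJ : ∀ x ∈ J, ∀ p : P, p * x ∈ J)
    (hMfg : ∃ S : Finset M, ∀ m : M, ∃ p : P, ∃ s ∈ S, m = p • s)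
    (M₀ : Set M) (hM₀ : ∀ m ∈ M₀, ∀ p : P, p • m ∈ M₀) :
    ∃ c : ℕ, ∀ n : ℕ, c < n →
      smulPow J n Set.univ ∩ M₀ = smulPow J (n - c) (smulPow J c Set.univ ∩ M₀) := by
  let I : SemigroupIdeal P := ⟨J, fun p x hx => hJ x hx p⟩
  obtain ⟨S, hS⟩ := hMfg
  obtain ⟨s, hs⟩ := Associates.exists_finset_associated_monomial hfg
  choose c hc using fun t : M =>
    I.exists_bounded_rees_generators hs {x : P × ℕ | x.1 ∈ J ^ x.2 ∧ x.1 • t ∈ M₀} fun x hx => hx.1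
  refine ⟨S.sup c, fun n hn => ?_⟩
  simp only [smulPow_eq_pow_smul]
  refine subset_antisymm ?_ (pow_smul_inter_subset J hM₀ hn.le)
  rintro _ ⟨⟨a, ha, m, -, rfl⟩, hm⟩
  obtain ⟨p, t, ht, rfl⟩ := hS m
  simp only [smul_smul] at hm ⊢
  obtain ⟨e, ⟨he, heM₀⟩, hec, q, hq, hqe⟩ :=
    hc t (a * p, n) ⟨mul_comm a p ▸ I.mul_mem_pow (by omega) ha p, hm⟩
  exact I.smul_mem_pow_smul_inter hM₀ (hec.trans (Finset.le_sup ht)) hn hq hqe he heM₀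

/-- Combinatorial Artin–Rees lemma: for a pointed monoid `P` with finitely generated sharp
quotient, an ideal `J ⊆ P`, a finitely generated pointed `P`-module `M` and a submodule
`M₀ ⊆ M`, there is `c ∈ ℕ` with `J^n M ∩ M₀ = J^(n-c) (J^c M ∩ M₀)` for all `n > c`. -/
theorem stmt8 {P M : Type*} [CommMonoidWithZero P] [Zero M] [MulActionWithZero P M]
    (hfg : Monoid.FG (Associates P))
    (J : Set P) (hJ0 : (0 : P) ∈ J) (hJ : ∀ x ∈ J, ∀ p : P, p * x ∈ J)
    (hMfg : ∃ S : Finset M, ∀ m : M, ∃ p : P, ∃ s ∈ S, m = p • s)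
    (M₀ : Set M) (h₀ : (0 : M) ∈ M₀) (hM₀ : ∀ m ∈ M₀, ∀ p : P, p • m ∈ M₀) :
    ∃ c : ℕ, ∀ n : ℕ, c < n →
      smulPow J n Set.univ ∩ M₀ = smulPow J (n - c) (smulPow J c Set.univ ∩ M₀) :=
  stmt8_general hfg J hJ hMfg M₀ hM₀
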